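/- Let a ∈ C³[0,1] and b ∈ C²[0,1] be real-valued, let λ_n (n ≥ 1) be the eigenvalues of the damped wave eigenvalue problem in the upper half-plane enumeration, set c_0 = −⟨a⟩, c_1 = ⟨a² + b⟩/(2πi), and S = Σ_{n≥1}(Re λ_n − c_0). Then for real λ → +∞, Σ_{n=1}^∞ (π²n² − |λ_n|² + 2λ Re λ_n)/(π²n² + λ²) = c_0 + (2S − c_0 − c_0²/2 + iπ c_1) λ^{−1} + O(λ^{−2}). -/

import Mathlib

/-!
Write `‖λₙ‖² = π²n² − r + c₀² + eₙ` and `Re λₙ = c₀ + dₙ` with `dₙ, eₙ = O(n⁻²)`. The summand becomes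
`(r − c₀² + 2λc₀ + 2λdₙ − eₙ) wₙ` with `wₙ = 1/(π²n² + λ²)`. The partial fraction expansion of the
cotangent at `iλ/π` gives `Σ wₙ = (λ coth λ − 1)/(2λ²) = 1/(2λ) − 1/(2λ²) + O(λ⁻³)`, which yields
`c₀ + ((r − c₀²)/2 − c₀)/λ`. Since `λwₙ − 1/λ = −π²n²wₙ/λ` and `Σ wₙ = O(1/λ)`, the decay of `dₙ` gives
`λ Σ dₙwₙ = S/λ + O(λ⁻²)`; finally `wₙ ≤ λ⁻²` gives `Σ eₙwₙ = O(λ⁻²)`.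
-/

/-- `⟨f⟩ = ∫₀¹ f(x) dx` for a function on `[0,1]`. -/
noncomputable def intAvg (f : ℝ → ℝ) : ℝ := ∫ x in (0:ℝ)..1, f x

/-- `λ` is an eigenvalue of the damped wave eigenvalue problem
`u'' − (λ² + 2λa − b)u = 0` on `(0,1)`, `u(0) = u(1) = 0`. -/
def IsDampedEigenvalue (a b : ℝ → ℝ) (l : ℂ) : Prop :=
  ∃ u : ℝ → ℂ,
    ContDiffOn ℝ 2 u (Set.Icc 0 1) ∧
    (∃ x ∈ Set.Icc (0:ℝ) 1, u x ≠ 0) ∧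
    (∀ x ∈ Set.Ioo (0:ℝ) 1,
      deriv (deriv u) x = (l ^ 2 + 2 * l * (a x : ℂ) - (b x : ℂ)) * u x) ∧
    u 0 = 0 ∧ u 1 = 0

open Real

noncomputable def lorentzWeight (l : ℝ) (n : ℕ) : ℝ := 1 / (π ^ 2 * ((n : ℝ) + 1) ^ 2 + l ^ 2)

lemma lorentzWeight_pos (l : ℝ) (n : ℕ) : 0 < lorentzWeight l n := by
  unfold lorentzWeight; positivity

section LorentzWeight

variable {l : ℝ}

lemma lorentzWeight_le (hl : l ≠ 0) (n : ℕ) : lorentzWeight l n ≤ 1 / l ^ 2 :=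
  one_div_le_one_div_of_le (by positivity) (le_add_of_nonneg_left (by positivity))

lemma mul_lorentzWeight_sub_inv (hl : l ≠ 0) (n : ℕ) :
    l * lorentzWeight l n - 1 / l = -(π ^ 2 * ((n : ℝ) + 1) ^ 2 * lorentzWeight l n / l) := by
  have hD : π ^ 2 * ((n : ℝ) + 1) ^ 2 + l ^ 2 ≠ 0 := (by positivity : (0 : ℝ) < _).ne'
  unfold lorentzWeight
  field_simp
  ring

theorem hasSum_lorentzWeight (hl : l ≠ 0) :
    HasSum (lorentzWeight l) ((l * cosh l / sinh l - 1) / (2 * l ^ 2)) := by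
  have hl' : (l : ℂ) ≠ 0 := by exact_mod_cast hl
  set x : ℂ := l * Complex.I / π
  have hx : x ∈ Complex.integerComplement := by
    rintro ⟨n, hn⟩
    have := congrArg Complex.im hn
    simp only [Complex.intCast_im, x, Complex.div_ofReal_im, Complex.mul_im, Complex.ofReal_re,
      Complex.I_im, Complex.ofReal_im, Complex.I_re, mul_zero, mul_one, add_zero] at this
    exact div_ne_zero hl pi_ne_zero this.symm
  have hsum := (summable_cotTerm hx).hasSum
  rw [← cot_series_rep' hx] at hsum
  have hterm (n : ℕ) : cotTerm x n = (-2 * π * l * Complex.I) * (lorentzWeight l n : ℂ) := by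
    have hD : ((π ^ 2 * ((n : ℝ) + 1) ^ 2 + l ^ 2 : ℝ) : ℂ) ≠ 0 := by
      exact_mod_cast (by positivity : (0 : ℝ) < π ^ 2 * ((n : ℝ) + 1) ^ 2 + l ^ 2).ne'
    have h1 : x - (n + 1) ≠ 0 := by
      simpa [sub_eq_add_neg] using Complex.integerComplement_add_ne_zero hx (-(n + 1) : ℤ)
    have h2 : x + (n + 1) ≠ 0 := by
      simpa using Complex.integerComplement_add_ne_zero hx ((n : ℤ) + 1)
    rw [cotTerm, div_add_div _ _ h1 h2, div_eq_iff (mul_ne_zero h1 h2), lorentzWeight]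
    push_cast at hD ⊢
    field_simp
    simp only [x]
    field_simp
    linear_combination (2 * (l : ℂ) ^ 3 * Complex.I) * Complex.I_sq
  have hvalue : (π * Complex.cot (π * x) - 1 / x) / (-2 * π * l * Complex.I)
      = (((l * cosh l / sinh l - 1) / (2 * l ^ 2) : ℝ) : ℂ) := by
    have hpx : (π : ℂ) * x = l * Complex.I := by
      simp only [x]; field_simp
    have hs : (sinh l : ℂ) ≠ 0 := by exact_mod_cast (sinh_ne_zero.mpr hl)
    rw [hpx, Complex.cot, Complex.cos_mul_I, Complex.sin_mul_I]
    simp only [x]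
    push_cast at hs ⊢
    field_simp
    linear_combination (Complex.sinh l - l * Complex.cosh l) * Complex.I_sq
  rw [funext hterm] at hsum
  have hreal := hsum.div_const (-2 * π * l * Complex.I)
  rw [hvalue] at hreal
  refine Complex.hasSum_ofReal.mp (hreal.congr_fun fun n => ?_)
  field_simp

lemma one_le_cosh_div_sinh (hl : 0 < l) : 1 ≤ cosh l / sinh l :=
  (one_le_div (sinh_pos_iff.mpr hl)).mpr (sinh_lt_cosh l).le

lemma cosh_div_sinh_sub_one_le (hl : 0 < l) : cosh l / sinh l - 1 ≤ 1 / l ^ 2 := by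
  have hs : 0 < sinh l := sinh_pos_iff.mpr hl
  have hexp : 1 + 2 * l + (2 * l) ^ 2 / 2 ≤ exp (2 * l) :=
    quadratic_le_exp_of_nonneg (by positivity)
  have hsq : exp (2 * l) = exp l ^ 2 := by rw [← exp_nat_mul]; ring_nf
  have hsinh : sinh l = (exp l - (exp l)⁻¹) / 2 := by rw [sinh_eq, exp_neg]
  have he : 0 < exp l := exp_pos l
  rw [div_sub_one hs.ne', cosh_sub_sinh, div_le_div_iff₀ hs (by positivity), exp_neg, hsinh]
  field_simp
  nlinarith

lemma abs_tsum_lorentzWeight_sub_le (hl : 0 < l) :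
    |∑' n, lorentzWeight l n - (1 / (2 * l) - 1 / (2 * l ^ 2))| ≤ 1 / (2 * l ^ 3) := by
  have hdiff : ∑' n, lorentzWeight l n - (1 / (2 * l) - 1 / (2 * l ^ 2))
      = (cosh l / sinh l - 1) / (2 * l) := by
    rw [(hasSum_lorentzWeight hl.ne').tsum_eq]
    field_simp
    ring
  have hcoth : 0 ≤ cosh l / sinh l - 1 := sub_nonneg.mpr (one_le_cosh_div_sinh hl)
  rw [hdiff, abs_of_nonneg (by positivity), div_le_div_iff₀ (by positivity) (by positivity)]
  calc (cosh l / sinh l - 1) * (2 * l ^ 3) ≤ 1 / l ^ 2 * (2 * l ^ 3) := by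
        gcongr
        exact cosh_div_sinh_sub_one_le hl
    _ = 1 * (2 * l) := by field_simp

lemma tsum_lorentzWeight_le (hl : 1 ≤ l) : ∑' n, lorentzWeight l n ≤ 1 / (2 * l) := by
  have h := (abs_le.mp (abs_tsum_lorentzWeight_sub_le (zero_lt_one.trans_le hl))).2
  have hl3 : 1 / (2 * l ^ 3) ≤ 1 / (2 * l ^ 2) := by
    gcongr
    norm_num
  linarith

end LorentzWeight

lemma hasSum_one_div_succ_sq : HasSum (fun n : ℕ => 1 / ((n : ℝ) + 1) ^ 2) (π ^ 2 / 6) := by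
  simpa using (hasSum_nat_add_iff' 1).mpr hasSum_zeta_two

section Perturbation

variable {l K : ℝ} {e : ℕ → ℝ}

lemma norm_mul_lorentzWeight_le (hl : l ≠ 0) (he : ∀ n : ℕ, |e n| ≤ K / ((n : ℝ) + 1) ^ 2)
    (n : ℕ) : ‖e n * lorentzWeight l n‖ ≤ K / l ^ 2 * (1 / ((n : ℝ) + 1) ^ 2) := by
  rw [Real.norm_eq_abs, abs_mul, abs_of_pos (lorentzWeight_pos l n)]
  calc |e n| * lorentzWeight l n ≤ K / ((n : ℝ) + 1) ^ 2 * (1 / l ^ 2) :=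
        mul_le_mul (he n) (lorentzWeight_le hl n) (lorentzWeight_pos l n).le
          ((abs_nonneg _).trans (he n))
    _ = K / l ^ 2 * (1 / ((n : ℝ) + 1) ^ 2) := by ring

lemma summable_mul_lorentzWeight (hl : l ≠ 0) (he : ∀ n : ℕ, |e n| ≤ K / ((n : ℝ) + 1) ^ 2) :
    Summable (fun n => e n * lorentzWeight l n) :=
  (hasSum_one_div_succ_sq.summable.mul_left _).of_norm_bounded (norm_mul_lorentzWeight_le hl he)

lemma abs_tsum_mul_lorentzWeight_le (hl : l ≠ 0) (he : ∀ n : ℕ, |e n| ≤ K / ((n : ℝ) + 1) ^ 2) :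
    |∑' n, e n * lorentzWeight l n| ≤ π ^ 2 * K / (6 * l ^ 2) := by
  refine (tsum_of_norm_bounded (hasSum_one_div_succ_sq.mul_left (K / l ^ 2))
    (norm_mul_lorentzWeight_le hl he)).trans_eq ?_
  field_simp

lemma abs_mul_tsum_mul_lorentzWeight_sub_le {d : ℕ → ℝ} {S : ℝ} (hl : 1 ≤ l)
    (hd : ∀ n : ℕ, |d n| ≤ K / ((n : ℝ) + 1) ^ 2) (hS : HasSum d S) :
    |l * ∑' n, d n * lorentzWeight l n - S / l| ≤ π ^ 2 * K / (2 * l ^ 2) := by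
  have hl0 : 0 < l := zero_lt_one.trans_le hl
  have hK : 0 ≤ K := by simpa using (abs_nonneg _).trans (hd 0)
  have hW := (hasSum_lorentzWeight hl0.ne').summable
  have hsplit : HasSum (fun n => -(d n * (π ^ 2 * ((n : ℝ) + 1) ^ 2 * lorentzWeight l n / l)))
      (l * ∑' n, d n * lorentzWeight l n - S / l) := by
    refine (((summable_mul_lorentzWeight hl0.ne' hd).hasSum.mul_left l).sub
      (hS.div_const l)).congr_fun fun n => ?_
    linear_combination (-d n) * mul_lorentzWeight_sub_inv hl0.ne' n
  have hbound (n : ℕ) : ‖-(d n * (π ^ 2 * ((n : ℝ) + 1) ^ 2 * lorentzWeight l n / l))‖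
      ≤ π ^ 2 * K / l * lorentzWeight l n := by
    have hw := lorentzWeight_pos l n
    have hX : 0 ≤ π ^ 2 * ((n : ℝ) + 1) ^ 2 * lorentzWeight l n / l := by positivity
    rw [norm_neg, Real.norm_eq_abs, abs_mul, abs_of_nonneg hX]
    calc |d n| * (π ^ 2 * ((n : ℝ) + 1) ^ 2 * lorentzWeight l n / l)
        ≤ K / ((n : ℝ) + 1) ^ 2 * (π ^ 2 * ((n : ℝ) + 1) ^ 2 * lorentzWeight l n / l) := by
          gcongr
          exact hd n
      _ = π ^ 2 * K / l * lorentzWeight l n := by field_simp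
  rw [← hsplit.tsum_eq]
  calc ‖∑' n, -(d n * (π ^ 2 * ((n : ℝ) + 1) ^ 2 * lorentzWeight l n / l))‖
      ≤ π ^ 2 * K / l * ∑' n, lorentzWeight l n := tsum_of_norm_bounded (hW.hasSum.mul_left _) hbound
    _ ≤ π ^ 2 * K / l * (1 / (2 * l)) := by
        gcongr
        exact tsum_lorentzWeight_le hl
    _ = π ^ 2 * K / (2 * l ^ 2) := by field_simp

end Perturbation

section Asymptotics

variable {l : ℝ}

lemma abs_affine_mul_tsum_lorentzWeight_sub_le (a b : ℝ) (hl : 1 ≤ l) :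
    |(a + 2 * l * b) * ∑' n, lorentzWeight l n - (b + (a / 2 - b) / l)| ≤ (|a| + |b|) / l ^ 2 := by
  have hl0 : 0 < l := zero_lt_one.trans_le hl
  set E := ∑' n, lorentzWeight l n - (1 / (2 * l) - 1 / (2 * l ^ 2))
  have hE : |E| ≤ 1 / (2 * l ^ 3) := abs_tsum_lorentzWeight_sub_le hl0
  have hsplit : (a + 2 * l * b) * ∑' n, lorentzWeight l n - (b + (a / 2 - b) / l)
      = (a + 2 * l * b) * E - a / (2 * l ^ 2) := by
    simp only [E]; field_simp; ring
  have hcoef : |a + 2 * l * b| ≤ |a| + 2 * l * |b| := by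
    simpa [abs_mul, abs_of_pos hl0] using abs_add_le a (2 * l * b)
  have hl3 : 1 / (2 * l ^ 3) ≤ 1 / (2 * l ^ 2) := by gcongr; norm_num
  rw [hsplit]
  calc |(a + 2 * l * b) * E - a / (2 * l ^ 2)|
      ≤ (|a| + 2 * l * |b|) * (1 / (2 * l ^ 3)) + |a| / (2 * l ^ 2) := by
        refine (abs_sub _ _).trans (add_le_add ?_ ?_)
        · rw [abs_mul]; gcongr
        · rw [abs_div, abs_of_pos (by positivity : (0 : ℝ) < 2 * l ^ 2)]
    _ ≤ |a| * (1 / (2 * l ^ 2)) + |b| / l ^ 2 + |a| / (2 * l ^ 2) := by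
        have hb : 2 * l * |b| * (1 / (2 * l ^ 3)) = |b| / l ^ 2 := by field_simp
        rw [add_mul, hb]
        gcongr
    _ = (|a| + |b|) / l ^ 2 := by field_simp; ring

theorem perturbed_lorentz_series_asymptotics {d e : ℕ → ℝ} {K S : ℝ} (c0 r : ℝ) (hl : 1 ≤ l)
    (hd : ∀ n : ℕ, |d n| ≤ K / ((n : ℝ) + 1) ^ 2) (he : ∀ n : ℕ, |e n| ≤ K / ((n : ℝ) + 1) ^ 2)
    (hS : HasSum d S) :
    Summable (fun n => (r - c0 ^ 2 + 2 * l * c0 + 2 * l * d n - e n) * lorentzWeight l n) ∧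
      |∑' n, (r - c0 ^ 2 + 2 * l * c0 + 2 * l * d n - e n) * lorentzWeight l n
          - (c0 + (2 * S - c0 - c0 ^ 2 / 2 + r / 2) / l)|
        ≤ (|r - c0 ^ 2| + |c0| + 7 * π ^ 2 * K / 6) / l ^ 2 := by
  have hl0 : l ≠ 0 := (zero_lt_one.trans_le hl).ne'
  have hW := (hasSum_lorentzWeight hl0).summable.hasSum
  have hD := (summable_mul_lorentzWeight hl0 hd).hasSum
  have hE := (summable_mul_lorentzWeight hl0 he).hasSum
  have hsum : HasSum (fun n => (r - c0 ^ 2 + 2 * l * c0 + 2 * l * d n - e n) * lorentzWeight l n)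
      ((r - c0 ^ 2 + 2 * l * c0) * ∑' n, lorentzWeight l n
        + (2 * l * ∑' n, d n * lorentzWeight l n - ∑' n, e n * lorentzWeight l n)) :=
    ((hW.mul_left _).add ((hD.mul_left _).sub hE)).congr_fun fun n => by ring
  refine ⟨hsum.summable, ?_⟩
  rw [hsum.tsum_eq]
  have hsplit : (r - c0 ^ 2 + 2 * l * c0) * ∑' n, lorentzWeight l n
        + (2 * l * ∑' n, d n * lorentzWeight l n - ∑' n, e n * lorentzWeight l n)
        - (c0 + (2 * S - c0 - c0 ^ 2 / 2 + r / 2) / l)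
      = ((r - c0 ^ 2 + 2 * l * c0) * ∑' n, lorentzWeight l n - (c0 + ((r - c0 ^ 2) / 2 - c0) / l))
        + 2 * (l * ∑' n, d n * lorentzWeight l n - S / l) - ∑' n, e n * lorentzWeight l n := by
    field_simp; ring
  rw [hsplit]
  have h1 := abs_affine_mul_tsum_lorentzWeight_sub_le (r - c0 ^ 2) c0 hl
  have h2 := abs_mul_tsum_mul_lorentzWeight_sub_le hl hd hS
  have h3 := abs_tsum_mul_lorentzWeight_le hl0 he
  calc _ ≤ (|r - c0 ^ 2| + |c0|) / l ^ 2 + 2 * (π ^ 2 * K / (2 * l ^ 2))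
        + π ^ 2 * K / (6 * l ^ 2) := by
        refine (abs_sub _ _).trans (add_le_add ((abs_add_le _ _).trans (add_le_add h1 ?_)) h3)
        rw [abs_mul, abs_two]
        gcongr
    _ = (|r - c0 ^ 2| + |c0| + 7 * π ^ 2 * K / 6) / l ^ 2 := by field_simp; ring

end Asymptotics

theorem first_power_series_asymptotics_general
    (Λ : ℕ → ℂ)
    (c0 r : ℝ)
    (habs : ∃ K : ℝ, ∀ n : ℕ, 1 ≤ n →
      |‖Λ n‖ ^ 2 - (Real.pi ^ 2 * (n : ℝ) ^ 2 - r + c0 ^ 2)| ≤ K / (n : ℝ) ^ 2)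
    (hre : ∃ K : ℝ, ∀ n : ℕ, 1 ≤ n → |(Λ n).re - c0| ≤ K / (n : ℝ) ^ 2)
    (S : ℝ) (hS : HasSum (fun n : ℕ => (Λ (n + 1)).re - c0) S) :
    ∃ C R : ℝ, 0 < R ∧ ∀ l : ℝ, R ≤ l →
      Summable (fun n : ℕ =>
        (Real.pi ^ 2 * ((n : ℝ) + 1) ^ 2 - ‖Λ (n + 1)‖ ^ 2
          + 2 * l * (Λ (n + 1)).re) / (Real.pi ^ 2 * ((n : ℝ) + 1) ^ 2 + l ^ 2)) ∧
      |(∑' n : ℕ,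
          (Real.pi ^ 2 * ((n : ℝ) + 1) ^ 2 - ‖Λ (n + 1)‖ ^ 2
            + 2 * l * (Λ (n + 1)).re) / (Real.pi ^ 2 * ((n : ℝ) + 1) ^ 2 + l ^ 2))
        - (c0 + (2 * S - c0 - c0 ^ 2 / 2 + r / 2) / l)| ≤ C / l ^ 2 := by
  obtain ⟨K₁, hK₁⟩ := habs
  obtain ⟨K₂, hK₂⟩ := hre
  set e : ℕ → ℝ := fun n => ‖Λ (n + 1)‖ ^ 2 - (π ^ 2 * ((n : ℝ) + 1) ^ 2 - r + c0 ^ 2)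
  set d : ℕ → ℝ := fun n => (Λ (n + 1)).re - c0
  have he (n : ℕ) : |e n| ≤ max K₁ K₂ / ((n : ℝ) + 1) ^ 2 := by
    have := hK₁ (n + 1) n.succ_pos
    push_cast at this
    exact this.trans (by gcongr; exact le_max_left _ _)
  have hd (n : ℕ) : |d n| ≤ max K₁ K₂ / ((n : ℝ) + 1) ^ 2 := by
    have := hK₂ (n + 1) n.succ_pos
    push_cast at this
    exact this.trans (by gcongr; exact le_max_right _ _)
  refine ⟨|r - c0 ^ 2| + |c0| + 7 * π ^ 2 * max K₁ K₂ / 6, 1, one_pos, fun l hl => ?_⟩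
  have hterm : (fun n : ℕ => (π ^ 2 * ((n : ℝ) + 1) ^ 2 - ‖Λ (n + 1)‖ ^ 2
        + 2 * l * (Λ (n + 1)).re) / (π ^ 2 * ((n : ℝ) + 1) ^ 2 + l ^ 2))
      = fun n => (r - c0 ^ 2 + 2 * l * c0 + 2 * l * d n - e n) * lorentzWeight l n := by
    ext n; simp only [d, e, lorentzWeight]; ring
  rw [hterm]
  exact perturbed_lorentz_series_asymptotics c0 r hl hd he hS

/-- for `a ∈ C³[0,1]`, `b ∈ C²[0,1]`, let `Λ n` (`n ≥ 1`) be the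
eigenvalues in the upper half-plane enumeration, `c₀ = −⟨a⟩`, `r = ⟨a² + b⟩`
(so `iπc₁ = r/2` and `−2πic₁ = −r`), and `S = Σ_{n≥1}(Re Λ n − c₀)`. Then for real
`λ → +∞`,
`Σ_{n≥1} (π²n² − |Λ n|² + 2λ Re Λ n)/(π²n² + λ²) = c₀ + (2S − c₀ − c₀²/2 + r/2)λ^{−1} + O(λ^{−2})`. -/
theorem first_power_series_asymptotics (a b : ℝ → ℝ)
    (ha : ContDiffOn ℝ 3 a (Set.Icc 0 1))
    (hb : ContDiffOn ℝ 2 b (Set.Icc 0 1))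
    (Λ : ℕ → ℂ)
    (hev : ∀ n : ℕ, 1 ≤ n → IsDampedEigenvalue a b (Λ n))
    (hup : ∀ n : ℕ, 1 ≤ n → 0 ≤ (Λ n).im)
    (hmono : ∀ n k : ℕ, 1 ≤ n → n ≤ k → (Λ n).im ≤ (Λ k).im)
    (c0 r : ℝ) (hc0 : c0 = -intAvg a) (hr : r = intAvg (fun x => (a x) ^ 2 + b x))
    (habs : ∃ K : ℝ, ∀ n : ℕ, 1 ≤ n →
      |‖Λ n‖ ^ 2 - (Real.pi ^ 2 * (n : ℝ) ^ 2 - r + c0 ^ 2)| ≤ K / (n : ℝ) ^ 2)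
    (hre : ∃ K : ℝ, ∀ n : ℕ, 1 ≤ n → |(Λ n).re - c0| ≤ K / (n : ℝ) ^ 2)
    (S : ℝ) (hS : HasSum (fun n : ℕ => (Λ (n + 1)).re - c0) S) :
    ∃ C R : ℝ, 0 < R ∧ ∀ l : ℝ, R ≤ l →
      Summable (fun n : ℕ =>
        (Real.pi ^ 2 * ((n : ℝ) + 1) ^ 2 - ‖Λ (n + 1)‖ ^ 2
          + 2 * l * (Λ (n + 1)).re) / (Real.pi ^ 2 * ((n : ℝ) + 1) ^ 2 + l ^ 2)) ∧
      |(∑' n : ℕ,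
          (Real.pi ^ 2 * ((n : ℝ) + 1) ^ 2 - ‖Λ (n + 1)‖ ^ 2
            + 2 * l * (Λ (n + 1)).re) / (Real.pi ^ 2 * ((n : ℝ) + 1) ^ 2 + l ^ 2))
        - (c0 + (2 * S - c0 - c0 ^ 2 / 2 + r / 2) / l)| ≤ C / l ^ 2 :=
  first_power_series_asymptotics_general Λ c0 r habs hre S hS
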